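/- For all natural numbers n, the sum over k from 0 to n of C(2n,k) * C(2n, n+k) * (1 + (n - 2k)*(H_k + H_{n+k})) equals C(2n-1, n). -/

import Mathlib

/-! Wilf–Zeilberger telescoping: with `F k` the summand, `F k = G k - G (k + 1)` for the
certificate `G` below, so the sum collapses to `G 0 - G (n + 1) = C(2n, n) / 2 = C(2n - 1, n)`. -/

open Finset

def harmonicQ (m : Nat) : ℚ := ∑ j ∈ Finset.range m, (1 : ℚ) / (j + 1)

lemma harmonicQ_succ (m : ℕ) : harmonicQ (m + 1) = harmonicQ m + 1 / (m + 1) := by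
  simp [harmonicQ, Finset.sum_range_succ]

lemma cast_choose_succ_right {K : Type*} [Field K] [CharZero K] {n k : ℕ} (hk : k ≤ n) :
    (n.choose (k + 1) : K) = n.choose k * (n - k) / (k + 1) := by
  rw [eq_div_iff (Nat.cast_add_one_ne_zero k), ← Nat.cast_sub hk]
  exact_mod_cast Nat.choose_succ_right_eq n k

lemma choose_two_mul_self_eq_two_mul {n : ℕ} (hn : 0 < n) :
    (2 * n).choose n = 2 * (2 * n - 1).choose n := by
  obtain ⟨m, rfl⟩ : ∃ m, n = m + 1 := ⟨n - 1, by omega⟩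
  rw [show 2 * (m + 1) - 1 = 2 * m + 1 by omega, show 2 * (m + 1) = 2 * m + 1 + 1 by ring,
    Nat.choose_succ_succ', Nat.choose_symm_half]
  ring

-- The certificate comes from Zeilberger's algorithm (Gosper's algorithm applied to the summand).
def wzCertificate (n k : ℕ) : ℚ :=
  (2 * n).choose k * (2 * n).choose (n + k) *
    ((2 * (n : ℚ) ^ 2 + 3 * n * k - k ^ 2) / (4 * (n : ℚ) ^ 2)
      - k * ((n : ℚ) + k) / (2 * n) * (harmonicQ k + harmonicQ (n + k)))

lemma summand_eq_wzCertificate_sub {n k : ℕ} (hn : 0 < n) (hk : k ≤ n) :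
    ((2 * n).choose k : ℚ) * ((2 * n).choose (n + k) : ℚ) *
        (1 + ((n : ℚ) - 2 * k) * (harmonicQ k + harmonicQ (n + k)))
      = wzCertificate n k - wzCertificate n (k + 1) := by
  have hchoose_k : ((2 * n).choose (k + 1) : ℚ) = (2 * n).choose k * (2 * n - k) / (k + 1) := by
    rw [cast_choose_succ_right (by omega)]; push_cast; ring
  have hchoose_nk : ((2 * n).choose (n + k + 1) : ℚ)
      = (2 * n).choose (n + k) * (n - k) / (n + k + 1) := by
    rw [cast_choose_succ_right (by omega)]; push_cast; ring
  have hn' : (n : ℚ) ≠ 0 := by positivity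
  have hnk : (n : ℚ) + k + 1 ≠ 0 := by positivity
  simp only [wzCertificate, ← add_assoc n k 1, hchoose_k, hchoose_nk, harmonicQ_succ]
  push_cast
  field_simp
  ring

lemma wzCertificate_succ_self (n : ℕ) : wzCertificate n (n + 1) = 0 := by
  simp [wzCertificate, Nat.choose_eq_zero_of_lt (show 2 * n < n + (n + 1) by omega)]

lemma wzCertificate_zero {n : ℕ} (hn : 0 < n) :
    wzCertificate n 0 = ((2 * n - 1).choose n : ℚ) := by
  have hn' : (n : ℚ) ≠ 0 := by positivity
  simp only [wzCertificate, Nat.choose_zero_right, add_zero, choose_two_mul_self_eq_two_mul hn]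
  push_cast
  field_simp
  ring

theorem stmt16 (n : ℕ) :
    ∑ k ∈ range (n + 1), ((2 * n).choose k : ℚ) * ((2 * n).choose (n + k) : ℚ) *
        (1 + ((n : ℚ) - 2 * k) * (harmonicQ k + harmonicQ (n + k)))
      = ((2 * n - 1).choose n : ℚ) := by
  -- The certificate divides by `n`, so `n = 0` (where `0 / 0 = 0`) is checked by hand.
  rcases Nat.eq_zero_or_pos n with rfl | hn
  · simp [harmonicQ]
  rw [Finset.sum_congr rfl fun k hk =>
      summand_eq_wzCertificate_sub hn (Nat.lt_succ_iff.mp (mem_range.mp hk)),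
    Finset.sum_range_sub', wzCertificate_succ_self, sub_zero, wzCertificate_zero hn]
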